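/- Let ℓ ≥ 6 be an integer and let x, y, z, s be natural numbers with x + y + z + ℓ = C(ℓ,2) + s and x ≤ C(s,2). Then x + 2y + 3z ≥ C(ℓ,2). -/
import Mathlib

lemma two_mul_choose_two (n : ℕ) : 2 * n.choose 2 = n * (n - 1) := by
  induction n with
  | zero => simp
  | succ k ih =>
    rw [Nat.choose_succ_succ, Nat.choose_one_right, Nat.mul_add, ih]
    cases k with
    | zero => simp
    | succ m => simp only [Nat.succ_sub_one]; ring

theorem stmt_1 (ℓ : ℕ) (hℓ : 6 ≤ ℓ) (x y z s : ℕ)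
    (hconstr : x + y + z + ℓ = ℓ.choose 2 + s) (hx : x ≤ s.choose 2) :
    ℓ.choose 2 ≤ x + 2 * y + 3 * z := by
  rcases le_or_gt ℓ s with hs | hs
  · omega
  · -- s ≤ ℓ : key inequality C(s,2) + 2ℓ ≤ C(ℓ,2) + 2s
    have es := two_mul_choose_two s
    have el := two_mul_choose_two ℓ
    have key : s.choose 2 + 2 * ℓ ≤ ℓ.choose 2 + 2 * s := by
      rcases Nat.eq_zero_or_pos s with rfl | hs1
      · obtain ⟨l', rfl⟩ : ∃ l', ℓ = l' + 1 := ⟨ℓ - 1, by omega⟩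
        simp only [Nat.add_sub_cancel] at el
        have h0 : Nat.choose 0 2 = 0 := rfl
        nlinarith
      · obtain ⟨s', rfl⟩ : ∃ s', s = s' + 1 := ⟨s - 1, by omega⟩
        obtain ⟨l', rfl⟩ : ∃ l', ℓ = l' + 1 := ⟨ℓ - 1, by omega⟩
        simp only [Nat.add_sub_cancel] at es el
        nlinarith [Nat.le_of_lt_succ (Nat.lt_of_lt_of_le hs (le_refl _))]
    omega
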